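/- arXiv:chao-dyn/9910003 — 4 statements merged into one kernel-verified Lean document; each statement's English description precedes it below -/
import Mathlib

section
/- Let a be a non-periodic recurrent point of the one-sided shift σ on Σ^N. Then Σ(a), the closure of the orbit of a, is a nonempty compact, perfect, totally disconnected metric space (hence homeomorphic to the Cantor set). -/
open Filter Topology Set

/-- The one-sided shift map on sequences. -/
def shift {X : Type*} (x : ℕ → X) : ℕ → X := fun i => x (i + 1)

/-- The discrete metric on a type. -/
noncomputable def discMetric {X : Type*} [DecidableEq X] (m n : X) : ℝ :=
  if m = n then 0 else 1

/-- The metric on the sequence space over a discrete alphabet: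
`ρ(x,y) = Σ_i 2^{-i} d(x_i,y_i)/(1+d(x_i,y_i))` with `d` the discrete metric. -/
noncomputable def rho {X : Type*} [DecidableEq X] (x y : ℕ → X) : ℝ :=
  ∑' i : ℕ, (1 / 2 : ℝ) ^ i * (discMetric (x i) (y i) / (1 + discMetric (x i) (y i)))

/-- A point is recurrent for `F` if every neighbourhood contains some forward iterate. -/
def IsRecurrentPt {M : Type*} [TopologicalSpace M] (F : M → M) (x : M) : Prop :=
  ∀ U ∈ nhds x, ∃ n > 0, F^[n] x ∈ U

/-- A point is periodic for `F` if `F^[n] x = x` for some `n > 0`. -/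
def IsPeriodicPoint {M : Type*} (F : M → M) (x : M) : Prop :=
  ∃ n > 0, F^[n] x = x

/-- A point is nonwandering for `F` if for every neighbourhood `U` there is `n > 0`
with `F^[n] '' U ∩ U` nonempty. -/
def IsNonwanderingPt {M : Type*} [TopologicalSpace M] (F : M → M) (x : M) : Prop :=
  ∀ U ∈ nhds x, ∃ n > 0, (F^[n] '' U ∩ U).Nonempty

/-!
A return of the recurrent point `a` to a neighbourhood of itself cannot land on `a`, since `a` is
not periodic; and no point of the orbit is periodic either, because an eventually periodic
recurrent point lies in the closure of its finite, hence closed, forward orbit. So the orbit is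
dense in itself and its closure is perfect; as a closed subset of the compact, totally
disconnected, second countable space `Σ^N` it is then a Cantor set by Brouwer's theorem.

For Brouwer's theorem, fix a point-separating sequence of clopen sets `U k` and split a nonempty
clopen node of depth `k` in two along `U k` whenever `U k` cuts it, and along some other `U j`
otherwise. Two points lying on the same branch then lie on the same side of every `U k`, so
sending a point to its branch is a continuous bijection onto `ℕ → Bool`.
-/

theorem finite_range_iterate_of_isPeriodicPt_iterate {M : Type*} {f : M → M} {x : M} {m k : ℕ}
    (hk : 0 < k) (h : Function.IsPeriodicPt f k (f^[m] x)) : (range fun n => f^[n] x).Finite := by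
  refine ((finite_Iio (m + k)).image fun i => f^[i] x).subset ?_
  rintro _ ⟨n, rfl⟩
  by_cases hn : n < m + k
  · exact ⟨n, hn, rfl⟩
  · refine ⟨(n - m) % k + m, by have := Nat.mod_lt (n - m) hk; simp only [mem_Iio]; omega, ?_⟩
    dsimp only
    rw [Function.iterate_add_apply, h.iterate_mod_apply, ← Function.iterate_add_apply,
      Nat.sub_add_cancel (by omega)]

section Recurrence

variable {M : Type*} [TopologicalSpace M] {f : M → M} {x : M}

theorem IsRecurrentPt.iterate (hf : Continuous f) (hx : IsRecurrentPt f x) (m : ℕ) :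
    IsRecurrentPt f (f^[m] x) := by
  intro U hU
  obtain ⟨n, hn, hmem⟩ := hx _ ((hf.iterate m).continuousAt.preimage_mem_nhds hU)
  refine ⟨n, hn, ?_⟩
  rwa [← Function.iterate_add_apply, add_comm, Function.iterate_add_apply]

theorem IsRecurrentPt.mem_closure_range_iterate_succ (hx : IsRecurrentPt f x) :
    x ∈ closure (range fun n => f^[n + 1] x) :=
  mem_closure_iff_nhds.2 fun U hU =>
    let ⟨n, hn, hmem⟩ := hx U hU
    ⟨f^[n] x, hmem, n - 1, by simp only [Nat.sub_add_cancel hn]⟩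

theorem IsRecurrentPt.isPeriodicPoint_of_iterate [T1Space M] (hx : IsRecurrentPt f x) {m : ℕ}
    (h : IsPeriodicPoint f (f^[m] x)) : IsPeriodicPoint f x := by
  obtain ⟨k, hk, hperiodic⟩ := h
  have hclosed : IsClosed (range fun n => f^[n + 1] x) :=
    ((finite_range_iterate_of_isPeriodicPt_iterate hk hperiodic).subset
      (range_subset_iff.2 fun n => mem_range_self (n + 1))).isClosed
  obtain ⟨n, hn⟩ := hclosed.closure_subset hx.mem_closure_range_iterate_succ
  exact ⟨n + 1, n.succ_pos, hn⟩

theorem IsRecurrentPt.accPt_range_iterate (hx : IsRecurrentPt f x)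
    (hper : ¬ IsPeriodicPoint f x) : AccPt x (𝓟 (range fun n => f^[n] x)) := by
  rw [accPt_iff_nhds]
  intro U hU
  obtain ⟨n, hn, hmem⟩ := hx U hU
  exact ⟨f^[n] x, ⟨hmem, mem_range_self n⟩, fun h => hper ⟨n, hn, h⟩⟩

theorem IsRecurrentPt.preperfect_range_iterate [T1Space M] (hf : Continuous f)
    (hx : IsRecurrentPt f x) (hper : ¬ IsPeriodicPoint f x) :
    Preperfect (range fun n => f^[n] x) := by
  rintro _ ⟨m, rfl⟩
  refine ((hx.iterate hf m).accPt_range_iterate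
    fun h => hper (hx.isPeriodicPoint_of_iterate h)).mono (principal_mono.2 ?_)
  rintro _ ⟨n, rfl⟩
  exact ⟨n + m, Function.iterate_add_apply f n m x⟩

end Recurrence

theorem Preperfect.perfectSpace {X : Type*} [TopologicalSpace X] {S : Set X} (h : Preperfect S) :
    PerfectSpace S :=
  perfectSpace_iff_forall_not_isolated.2 fun x => nhds_ne_subtype_neBot_iff.2 (h x x.2)

theorem continuous_shift {X : Type*} [TopologicalSpace X] : Continuous (shift (X := X)) :=
  continuous_pi fun i => continuous_apply (i + 1)

namespace Brouwer

variable {X : Type*} (U : ℕ → Set X)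

def Splits (V C : Set X) : Prop :=
  (C ∩ V).Nonempty ∧ (C \ V).Nonempty

theorem subset_or_disjoint_of_not_splits {V C : Set X} (h : ¬ Splits V C) :
    C ⊆ V ∨ Disjoint C V := by
  rw [Splits, not_and_or, not_nonempty_iff_eq_empty, not_nonempty_iff_eq_empty,
    sdiff_eq_empty, ← disjoint_iff_inter_eq_empty] at h
  exact h.symm

open scoped Classical in
/-- A node of depth `k` is cut along `U k` whenever `U k` cuts it, so that every node of depth
`k + 1` lies inside or outside `U k`. -/
noncomputable def splitIndex (k : ℕ) (C : Set X) : ℕ :=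
  if Splits (U k) C then k else Classical.epsilon fun j => Splits (U j) C

noncomputable def node : List Bool → Set X
  | [] => univ
  | true :: l => node l ∩ U (splitIndex U l.length (node l))
  | false :: l => node l \ U (splitIndex U l.length (node l))

theorem node_cons_subset (b : Bool) (l : List Bool) : node U (b :: l) ⊆ node U l := by
  cases b
  exacts [sdiff_subset, inter_subset_left]

theorem node_false_union_node_true (l : List Bool) :
    node U (false :: l) ∪ node U (true :: l) = node U l :=
  sdiff_union_inter _ _

theorem disjoint_node_false_node_true (l : List Bool) :
    Disjoint (node U (false :: l)) (node U (true :: l)) :=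
  disjoint_sdiff_inter

theorem node_cons_subset_or_disjoint (b : Bool) (l : List Bool) :
    node U (b :: l) ⊆ U l.length ∨ Disjoint (node U (b :: l)) (U l.length) := by
  by_cases h : Splits (U l.length) (node U l)
  · cases b
    · exact Or.inr (by simpa [node, splitIndex, h] using disjoint_sdiff_left)
    · exact Or.inl (by simp [node, splitIndex, h])
  · rcases subset_or_disjoint_of_not_splits h with h | h
    · exact Or.inl ((node_cons_subset U b l).trans h)
    · exact Or.inr (h.mono_left (node_cons_subset U b l))

open scoped Classical in
noncomputable def address (x : X) : ℕ → List Bool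
  | 0 => []
  | n + 1 => decide (x ∈ node U (true :: address x n)) :: address x n

open scoped Classical in
noncomputable def code (x : X) (n : ℕ) : Bool :=
  decide (x ∈ node U (true :: address U x n))

theorem address_succ (x : X) (n : ℕ) : address U x (n + 1) = code U x n :: address U x n :=
  rfl

theorem res_code (x : X) (n : ℕ) : PiNat.res (code U x) n = address U x n := by
  induction n with
  | zero => rfl
  | succ n ih => rw [PiNat.res_succ, ih, address_succ]

theorem length_address (x : X) (n : ℕ) : (address U x n).length = n := by
  rw [← res_code, PiNat.res_length]

theorem mem_node_address (x : X) (n : ℕ) : x ∈ node U (address U x n) := by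
  induction n with
  | zero => trivial
  | succ n ih =>
    rw [address_succ, code]
    by_cases h : x ∈ node U (true :: address U x n)
    · simp [h]
    · rw [← node_false_union_node_true] at ih
      simpa [h] using ih

theorem address_eq_of_mem_node {x : X} {l : List Bool} (hx : x ∈ node U l) :
    address U x l.length = l := by
  induction l with
  | nil => rfl
  | cons b l ih =>
    rw [List.length_cons, address_succ, code, ih (node_cons_subset U b l hx)]
    cases b
    · simpa using (disjoint_node_false_node_true U l).notMem_of_mem_left hx
    · simpa using hx

theorem code_injective (hsep : ∀ x y, (∀ n, x ∈ U n ↔ y ∈ U n) → x = y) :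
    Function.Injective (code U) := by
  intro x y hxy
  refine hsep x y fun n => ?_
  have hy : y ∈ node U (address U x (n + 1)) := by
    rw [← res_code, hxy, res_code]
    exact mem_node_address U y (n + 1)
  have hx := mem_node_address U x (n + 1)
  rw [address_succ] at hx hy
  rcases node_cons_subset_or_disjoint U (code U x n) (address U x n) with h | h <;>
    rw [length_address] at h
  · exact iff_of_true (h hx) (h hy)
  · exact iff_of_false (h.notMem_of_mem_left hx) (h.notMem_of_mem_left hy)

variable [TopologicalSpace X]

theorem isClopen_node (hU : ∀ n, IsClopen (U n)) (l : List Bool) : IsClopen (node U l) := by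
  induction l with
  | nil => exact isClopen_univ
  | cons b l ih =>
    cases b
    exacts [ih.diff (hU _), ih.inter (hU _)]

section Perfect

variable {U} [PerfectSpace X] (hsep : ∀ x y, (∀ n, x ∈ U n ↔ y ∈ U n) → x = y)
include hsep

theorem exists_splits {C : Set X} (hC : IsOpen C) (hne : C.Nonempty) : ∃ j, Splits (U j) C := by
  obtain ⟨x, hx⟩ := hne
  obtain ⟨y, hy, hyx⟩ := Filter.nonempty_of_mem (f := 𝓝[≠] x)
    (inter_mem (mem_nhdsWithin_of_mem_nhds (hC.mem_nhds hx)) self_mem_nhdsWithin)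
  by_contra! h
  refine hyx (hsep y x fun n => ?_)
  rcases subset_or_disjoint_of_not_splits (h n) with h | h
  · exact ⟨fun _ => h hx, fun _ => h hy⟩
  · exact ⟨fun hyU => (h.notMem_of_mem_left hy hyU).elim,
      fun hxU => (h.notMem_of_mem_left hx hxU).elim⟩

theorem splits_splitIndex {C : Set X} (hC : IsOpen C) (hne : C.Nonempty) (k : ℕ) :
    Splits (U (splitIndex U k C)) C := by
  unfold splitIndex
  split_ifs with h
  exacts [h, Classical.epsilon_spec (exists_splits hsep hC hne)]

theorem nonempty_node [Nonempty X] (hU : ∀ n, IsClopen (U n)) (l : List Bool) :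
    (node U l).Nonempty := by
  induction l with
  | nil => exact univ_nonempty
  | cons b l ih =>
    have h := splits_splitIndex hsep (isClopen_node U hU l).isOpen ih l.length
    cases b
    exacts [h.2, h.1]

end Perfect

theorem continuous_code (hU : ∀ n, IsClopen (U n)) : Continuous (code U) := by
  refine continuous_pi fun n => IsLocallyConstant.continuous <|
    (IsLocallyConstant.iff_eventually_eq _).2 fun x => ?_
  filter_upwards [(isClopen_node U hU _).isOpen.mem_nhds (mem_node_address U x (n + 1))]
    with y hy
  have h := address_eq_of_mem_node U hy
  rw [length_address, address_succ, address_succ] at h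
  exact (List.cons.inj h).1

theorem code_surjective [CompactSpace X] [PerfectSpace X] [Nonempty X]
    (hU : ∀ n, IsClopen (U n)) (hsep : ∀ x y, (∀ n, x ∈ U n ↔ y ∈ U n) → x = y) :
    Function.Surjective (code U) := by
  intro b
  obtain ⟨x, hx⟩ := IsCompact.nonempty_iInter_of_sequence_nonempty_isCompact_isClosed
    (fun n => node U (PiNat.res b n)) (fun n => node_cons_subset U (b n) _)
    (fun n => nonempty_node hsep hU _) (isClopen_node U hU _).isClosed.isCompact
    (fun n => (isClopen_node U hU _).isClosed)
  refine ⟨x, PiNat.res_injective (funext fun n => ?_)⟩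
  have h := address_eq_of_mem_node U (mem_iInter.1 hx n)
  rwa [PiNat.res_length, ← res_code] at h

end Brouwer

theorem exists_seq_isClopen_separating {X : Type*} [TopologicalSpace X] [CompactSpace X]
    [T2Space X] [TotallyDisconnectedSpace X] [SecondCountableTopology X] :
    ∃ U : ℕ → Set X, (∀ n, IsClopen (U n)) ∧ ∀ x y, (∀ n, x ∈ U n ↔ y ∈ U n) → x = y := by
  obtain ⟨S, hS, hScount, hSbasis⟩ := (isTopologicalBasis_isClopen (X := X)).exists_countable
  have : HasCountableSeparatingOn X IsClopen univ :=
    ⟨⟨S, hScount, hS, fun x _ y _ h => hSbasis.eq_iff.2 h⟩⟩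
  obtain ⟨U, hU, hsep⟩ := exists_seq_separating X isClopen_empty univ
  exact ⟨U, hU, fun x y => hsep x trivial y trivial⟩

theorem nonempty_homeomorph_nat_bool (X : Type*) [TopologicalSpace X] [CompactSpace X]
    [T2Space X] [TotallyDisconnectedSpace X] [SecondCountableTopology X] [PerfectSpace X]
    [Nonempty X] : Nonempty (X ≃ₜ (ℕ → Bool)) := by
  obtain ⟨U, hU, hsep⟩ := exists_seq_isClopen_separating (X := X)
  exact ⟨(Brouwer.continuous_code U hU).homeoOfEquivCompactToT2
    (f := Equiv.ofBijective _ ⟨Brouwer.code_injective U hsep, Brouwer.code_surjective U hU hsep⟩)⟩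

theorem orbitClosure_cantor_general {N : ℕ} (a : ℕ → Fin N)
    (hrec : IsRecurrentPt shift a) (hper : ¬ IsPeriodicPoint shift a) :
    (closure (Set.range fun n : ℕ => shift^[n] a)).Nonempty ∧
    IsCompact (closure (Set.range fun n : ℕ => shift^[n] a)) ∧
    Perfect (closure (Set.range fun n : ℕ => shift^[n] a)) ∧
    IsTotallyDisconnected (closure (Set.range fun n : ℕ => shift^[n] a)) ∧
    Nonempty ((closure (Set.range fun n : ℕ => shift^[n] a)) ≃ₜ (ℕ → Bool)) := by
  set K := closure (Set.range fun n : ℕ => shift^[n] a)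
  have hne : K.Nonempty := ⟨a, subset_closure ⟨0, rfl⟩⟩
  have hcpt : IsCompact K := isClosed_closure.isCompact
  have hperf : Perfect K := (hrec.preperfect_range_iterate continuous_shift hper).perfect_closure
  refine ⟨hne, hcpt, hperf, isTotallyDisconnected_of_totallyDisconnectedSpace K, ?_⟩
  have : CompactSpace K := isCompact_iff_compactSpace.mp hcpt
  have : Nonempty K := hne.to_subtype
  have : PerfectSpace K := hperf.acc.perfectSpace
  exact nonempty_homeomorph_nat_bool K

/-- The orbit closure of a non-periodic recurrent point of the shift on `Σ^N` is a
nonempty compact, perfect, totally disconnected space, homeomorphic to the Cantor set. -/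
theorem orbitClosure_cantor {N : ℕ} (hN : 2 ≤ N) (a : ℕ → Fin N)
    (hrec : IsRecurrentPt shift a) (hper : ¬ IsPeriodicPoint shift a) :
    (closure (Set.range fun n : ℕ => shift^[n] a)).Nonempty ∧
    IsCompact (closure (Set.range fun n : ℕ => shift^[n] a)) ∧
    Perfect (closure (Set.range fun n : ℕ => shift^[n] a)) ∧
    IsTotallyDisconnected (closure (Set.range fun n : ℕ => shift^[n] a)) ∧
    Nonempty ((closure (Set.range fun n : ℕ => shift^[n] a)) ≃ₜ (ℕ → Bool)) :=
  orbitClosure_cantor_general a hrec hper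
end

section
/- If a is a non-periodic recurrent point of the one-sided shift σ on Σ^N, then σ restricted to Σ(a) has sensitive dependence on initial conditions with sensitivity constant δ = 1/2: for every x ∈ Σ(a) and every neighbourhood V of x in Σ(a), there exist y ∈ V and n ≥ 0 with ρ(σ^n(x), σ^n(y)) > 1/2. -/
open Filter Topology Set

lemma shift_iterate {X : Type*} (x : ℕ → X) (n i : ℕ) : shift^[n] x i = x (i + n) := by
  induction n generalizing x i with
  | zero => rfl
  | succ n ih =>
    rw [Function.iterate_succ_apply, ih]
    simp [shift, Nat.add_assoc]

/-- cylinder sets are neighbourhoods -/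
lemma cylinder_mem_nhds {N : ℕ} (x : ℕ → Fin N) (k : ℕ) :
    {z : ℕ → Fin N | ∀ i < k, z i = x i} ∈ nhds x := by
  have : {z : ℕ → Fin N | ∀ i < k, z i = x i} =
      ⋂ i ∈ Finset.range k, (fun z : ℕ → Fin N => z i) ⁻¹' {x i} := by
    ext z; simp [Set.mem_iInter]
  rw [this]
  refine (Filter.biInter_finset_mem _).2 fun i _ => ?_
  exact (continuous_apply i).continuousAt.preimage_mem_nhds (by simp)

/-- every nhd contains a cylinder -/
lemma exists_cylinder_subset {N : ℕ} {x : ℕ → Fin N} {U : Set (ℕ → Fin N)}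
    (hU : U ∈ nhds x) : ∃ k, ∀ z : ℕ → Fin N, (∀ i < k, z i = x i) → z ∈ U := by
  rw [nhds_pi, Filter.mem_pi] at hU
  obtain ⟨I, hIfin, t, ht, hsub⟩ := hU
  obtain ⟨k, hk⟩ := hIfin.bddAbove
  refine ⟨k + 1, fun z hz => hsub fun i hi => ?_⟩
  rw [hz i (Nat.lt_succ_of_le (hk hi))]
  exact mem_of_mem_nhds (ht i)

lemma recur_word {N : ℕ} {a : ℕ → Fin N} (hrec : IsRecurrentPt shift a) (k : ℕ) :
    ∃ m > 0, ∀ i < k, a (i + m) = a i := by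
  obtain ⟨m, hm, hmem⟩ := hrec _ (cylinder_mem_nhds a k)
  exact ⟨m, hm, fun i hi => by simpa [shift_iterate] using hmem i hi⟩

/-- arbitrarily large returns with long agreement -/
lemma recur_large {N : ℕ} {a : ℕ → Fin N} (hrec : IsRecurrentPt shift a) (s k : ℕ) :
    ∃ m, s ≤ m ∧ 0 < m ∧ ∀ i < k, a (i + m) = a i := by
  induction s with
  | zero =>
    obtain ⟨m, hm, h⟩ := recur_word hrec k
    exact ⟨m, Nat.zero_le _, hm, h⟩
  | succ s ih =>
    obtain ⟨m, hsm, hm, h⟩ := ih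
    obtain ⟨m2, hm2, h2⟩ := recur_word hrec (m + k)
    refine ⟨m + m2, by omega, by omega, fun i hi => ?_⟩
    have e1 : a (i + (m + m2)) = a (i + m) := by
      have := h2 (i + m) (by omega)
      simpa [Nat.add_assoc, Nat.add_comm, Nat.add_left_comm] using this
    rw [e1, h i hi]

/-- eventually periodic + recurrent ⇒ periodic -/
lemma ev_periodic {N : ℕ} {a : ℕ → Fin N} (hrec : IsRecurrentPt shift a)
    {p M : ℕ} (hp : 0 < p) (h : ∀ i, M ≤ i → a (i + p) = a i) :
    IsPeriodicPoint shift a := by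
  refine ⟨p, hp, funext fun i => ?_⟩
  rw [shift_iterate]
  obtain ⟨m, hMm, hm, hagree⟩ := recur_large hrec M (i + p + 1)
  have e1 : a (i + p + m) = a (i + p) := hagree (i + p) (by omega)
  have e2 : a (i + m) = a i := hagree i (by omega)
  have e3 : a (i + m + p) = a (i + m) := h (i + m) (by omega)
  have : a (i + p + m) = a (i + m + p) := by ring_nf
  rw [this, e3, e2] at e1
  exact e1.symm

lemma rho_gt_half {N : ℕ} {u v : ℕ → Fin N} {q : ℕ} (hq : 0 < q)
    (h0 : u 0 ≠ v 0) (hqd : u q ≠ v q) : rho u v > 1 / 2 := by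
  set f : ℕ → ℝ := fun i =>
    (1 / 2 : ℝ) ^ i * (discMetric (u i) (v i) / (1 + discMetric (u i) (v i))) with hf
  have hd : ∀ i, 0 ≤ discMetric (u i) (v i) ∧ discMetric (u i) (v i) ≤ 1 := by
    intro i; unfold discMetric; split <;> norm_num
  have hnn : ∀ i, 0 ≤ f i := by
    intro i
    have := hd i
    have h1 : (0:ℝ) < 1 + discMetric (u i) (v i) := by linarith [this.1]
    exact mul_nonneg (by positivity) (div_nonneg this.1 h1.le)
  have hle : ∀ i, f i ≤ (1 / 2 : ℝ) ^ i := by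
    intro i
    have := hd i
    have h1 : (0:ℝ) < 1 + discMetric (u i) (v i) := by linarith [this.1]
    have : discMetric (u i) (v i) / (1 + discMetric (u i) (v i)) ≤ 1 := by
      rw [div_le_one h1]; linarith [this.2]
    calc f i ≤ (1/2:ℝ)^i * 1 := by
          apply mul_le_mul_of_nonneg_left this (by positivity)
      _ = (1/2:ℝ)^i := by ring
  have hsum : Summable f :=
    Summable.of_nonneg_of_le hnn hle (summable_geometric_of_lt_one (by norm_num) (by norm_num))
  have hsum' : ∑ i ∈ ({0, q} : Finset ℕ), f i ≤ rho u v :=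
    Summable.sum_le_tsum _ (fun i _ => hnn i) hsum
  rw [Finset.sum_pair hq.ne] at hsum'
  have hf0 : f 0 = 1 / 2 := by
    simp only [hf, discMetric, if_neg h0]
    norm_num
  have hfq : 0 < f q := by
    simp only [hf, discMetric, if_neg hqd]
    positivity
  linarith

/-- a point with at most one difference from x agrees eventually -/
lemma eventually_agree {N : ℕ} {x y : ℕ → Fin N}
    (h : ¬ ∃ p q, p < q ∧ y p ≠ x p ∧ y q ≠ x q) :
    ∃ M, ∀ i, M ≤ i → y i = x i := by
  push_neg at h
  by_cases hyx : y = x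
  · exact ⟨0, fun i _ => by rw [hyx]⟩
  · obtain ⟨c, hc⟩ := Function.ne_iff.1 hyx
    refine ⟨c + 1, fun i hi => ?_⟩
    have := h c i (by omega)
    tauto

/-- The shift restricted to the orbit closure of a non-periodic recurrent point has
sensitive dependence on initial conditions with sensitivity constant `1/2`. -/
theorem sdic_on_orbitClosure {N : ℕ} (a : ℕ → Fin N)
    (hrec : IsRecurrentPt shift a) (hper : ¬ IsPeriodicPoint shift a) :
    ∀ x ∈ closure (Set.range fun n : ℕ => shift^[n] a),
      ∀ V ∈ nhdsWithin x (closure (Set.range fun n : ℕ => shift^[n] a)),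
        ∃ y ∈ V, ∃ n : ℕ, rho (shift^[n] x) (shift^[n] y) > 1 / 2 := by
  intro x hx V hV
  set S := closure (Set.range fun n : ℕ => shift^[n] a) with hS
  -- every cylinder around x contains an orbit point
  have visit : ∀ k, ∃ n : ℕ, ∀ i < k, a (i + n) = x i := by
    intro k
    have := (mem_closure_iff_nhds.1 hx) _ (cylinder_mem_nhds x k)
    obtain ⟨z, hz1, n, hn⟩ := this
    exact ⟨n, fun i hi => by rw [← hn] at hz1; simpa [shift_iterate] using hz1 i hi⟩
  obtain ⟨U, hUopen, hxU, hUV⟩ := mem_nhdsWithin.1 hV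
  obtain ⟨k, hk⟩ := exists_cylinder_subset (hUopen.mem_nhds hxU)
  obtain ⟨n₀, hn₀⟩ := visit k
  -- find a second, different, orbit index whose point is in the cylinder
  have second : ∃ n₁, n₁ ≠ n₀ ∧ ∀ i < k, a (i + n₁) = x i := by
    by_cases hxb : ∀ i, x i = a (i + n₀)
    · obtain ⟨m, hm, hagree⟩ := recur_word hrec (n₀ + k)
      refine ⟨n₀ + m, by omega, fun i hi => ?_⟩
      have : a (i + n₀ + m) = a (i + n₀) := hagree (i + n₀) (by omega)
      rw [hxb i, ← this]; ring_nf
    · push_neg at hxb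
      obtain ⟨c, hc⟩ := hxb
      obtain ⟨n₁, hn₁⟩ := visit (k + c + 1)
      refine ⟨n₁, fun hcon => ?_, fun i hi => hn₁ i (by omega)⟩
      exact hc (by rw [← hn₁ c (by omega), hcon])
  obtain ⟨n₁, hn₁ne, hn₁⟩ := second
  -- the two orbit points
  set y₀ : ℕ → Fin N := shift^[n₀] a with hy₀
  set y₁ : ℕ → Fin N := shift^[n₁] a with hy₁
  have hy₀mem : y₀ ∈ V := by
    apply hUV
    refine ⟨hk _ fun i hi => by simpa [hy₀, shift_iterate] using hn₀ i hi,
      subset_closure ⟨n₀, rfl⟩⟩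
  have hy₁mem : y₁ ∈ V := by
    apply hUV
    refine ⟨hk _ fun i hi => by simpa [hy₁, shift_iterate] using hn₁ i hi,
      subset_closure ⟨n₁, rfl⟩⟩
  -- one of them must differ from x in at least two places
  have key : (∃ p q, p < q ∧ y₀ p ≠ x p ∧ y₀ q ≠ x q) ∨
      (∃ p q, p < q ∧ y₁ p ≠ x p ∧ y₁ q ≠ x q) := by
    by_contra hcon
    push_neg at hcon
    obtain ⟨M₀, hM₀⟩ := eventually_agree (x := x) (y := y₀) (by tauto)
    obtain ⟨M₁, hM₁⟩ := eventually_agree (x := x) (y := y₁) (by tauto)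
    -- a is eventually periodic
    rcases Nat.lt_or_ge n₀ n₁ with hlt | hge
    · apply hper
      refine ev_periodic hrec (p := n₁ - n₀) (M := max M₀ M₁ + n₀) (by omega) ?_
      intro i hi
      have e0 : a ((i - n₀) + n₀) = x (i - n₀) := by
        have := hM₀ (i - n₀) (by omega)
        simpa [hy₀, shift_iterate] using this
      have e1 : a ((i - n₀) + n₁) = x (i - n₀) := by
        have := hM₁ (i - n₀) (by omega)
        simpa [hy₁, shift_iterate] using this
      have : i + (n₁ - n₀) = (i - n₀) + n₁ := by omega
      rw [this, e1, ← e0]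
      congr 1; omega
    · have hlt : n₁ < n₀ := by omega
      apply hper
      refine ev_periodic hrec (p := n₀ - n₁) (M := max M₀ M₁ + n₁) (by omega) ?_
      intro i hi
      have e0 : a ((i - n₁) + n₀) = x (i - n₁) := by
        have := hM₀ (i - n₁) (by omega)
        simpa [hy₀, shift_iterate] using this
      have e1 : a ((i - n₁) + n₁) = x (i - n₁) := by
        have := hM₁ (i - n₁) (by omega)
        simpa [hy₁, shift_iterate] using this
      have : i + (n₀ - n₁) = (i - n₁) + n₀ := by omega
      rw [this, e0, ← e1]
      congr 1; omega
  -- conclude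
  rcases key with ⟨p, q, hpq, hp, hq⟩ | ⟨p, q, hpq, hp, hq⟩
  · refine ⟨y₀, hy₀mem, p, ?_⟩
    apply rho_gt_half (q := q - p) (by omega)
    · simpa [shift_iterate] using (Ne.symm hp)
    · have h1 : shift^[p] x (q - p) = x q := by rw [shift_iterate]; congr 1; omega
      have h2 : shift^[p] y₀ (q - p) = y₀ q := by rw [shift_iterate]; congr 1; omega
      rw [h1, h2]; exact Ne.symm hq
  · refine ⟨y₁, hy₁mem, p, ?_⟩
    apply rho_gt_half (q := q - p) (by omega)
    · simpa [shift_iterate] using (Ne.symm hp)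
    · have h1 : shift^[p] x (q - p) = x q := by rw [shift_iterate]; congr 1; omega
      have h2 : shift^[p] y₁ (q - p) = y₁ q := by rw [shift_iterate]; congr 1; omega
      rw [h1, h2]; exact Ne.symm hq
end

section
/- If a is a recurrent point of the shift σ on Σ^X, then every point of Σ(a) is nonwandering for the restriction σ|_{Σ(a)}: Ω(σ|_{Σ(a)}) = Σ(a). -/
open Filter Topology Set

/-- If `a` is recurrent then every point of the orbit closure `Σ(a)` is nonwandering
for the restriction of the shift to `Σ(a)`. -/
theorem nonwandering_on_orbitClosure {X : Type*} [MetricSpace X] (a : ℕ → X)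
    (hrec : IsRecurrentPt shift a) :
    ∀ x ∈ closure (Set.range fun n : ℕ => shift^[n] a),
      ∀ U : Set (ℕ → X), IsOpen U → x ∈ U →
        ∃ n > 0,
          (shift^[n] '' (U ∩ closure (Set.range fun n : ℕ => shift^[n] a)) ∩
            (U ∩ closure (Set.range fun n : ℕ => shift^[n] a))).Nonempty := by
  intro x hx U hU hxU
  have hcont : Continuous (shift (X := X)) :=
    continuous_pi fun i => continuous_apply (i + 1)
  -- orbit points lie in U for some m
  obtain ⟨y, hyU, m, hym⟩ :
      ∃ y ∈ U, ∃ m : ℕ, shift^[m] a = y := by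
    have := mem_closure_iff.1 hx U hU hxU
    obtain ⟨y, hyU, hyr⟩ := this
    obtain ⟨m, hm⟩ := hyr
    exact ⟨y, hyU, m, hm⟩
  subst hym
  -- recurrence gives k>0 with shift^[m+k] a ∈ U
  have hV : (shift^[m] ⁻¹' U) ∈ nhds a := by
    refine IsOpen.mem_nhds (hU.preimage (hcont.iterate m)) ?_
    simpa using hyU
  obtain ⟨k, hk, hka⟩ := hrec _ hV
  refine ⟨k, hk, shift^[k] (shift^[m] a), ?_, ?_⟩
  · refine ⟨shift^[m] a, ⟨hyU, ?_⟩, rfl⟩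
    exact subset_closure ⟨m, rfl⟩
  · constructor
    · have : shift^[k] (shift^[m] a) = shift^[m] (shift^[k] a) := by
        rw [← Function.iterate_add_apply, ← Function.iterate_add_apply, Nat.add_comm]
      rw [this]
      exact hka
    · refine subset_closure ⟨k + m, ?_⟩
      simp [Function.iterate_add_apply]
end

section
/- If a is a non-periodic recurrent point of the one-sided shift σ on Σ^N, then the subshift (Σ(a), σ) is chaotic in the sense of Robinson: σ|_{Σ(a)} is topologically transitive and has sensitive dependence on initial conditions. -/
open Filter Topology Set

lemma continuous_shift_s13 {N : ℕ} : Continuous (shift : (ℕ → Fin N) → (ℕ → Fin N)) :=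
  continuous_pi fun i => continuous_apply (i + 1)

section
variable {N : ℕ} {a : ℕ → Fin N}

lemma rec_large (hrec : IsRecurrentPt shift a) {U : Set (ℕ → Fin N)} (hU : IsOpen U)
    (ha : a ∈ U) : ∀ K, ∃ p > K, shift^[p] a ∈ U := by
  intro K
  induction K with
  | zero => exact hrec U (hU.mem_nhds ha)
  | succ K ih =>
      obtain ⟨p, hp, hpU⟩ := ih
      have hpre : (shift^[p] ⁻¹' U : Set (ℕ → Fin N)) ∈ nhds a :=
        ((continuous_shift_s13.iterate p).isOpen_preimage U hU).mem_nhds hpU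
      obtain ⟨q, hq, hqU⟩ := hrec _ hpre
      refine ⟨p + q, by omega, ?_⟩
      rw [Function.iterate_add_apply]
      exact hqU

def cyl {N : ℕ} (x : ℕ → Fin N) (k : ℕ) : Set (ℕ → Fin N) := {y | ∀ i < k, y i = x i}

lemma isOpen_cyl (x : ℕ → Fin N) (k : ℕ) : IsOpen (cyl x k) := by
  have : cyl x k = ⋂ i ∈ Set.Iio k, (fun y : ℕ → Fin N => y i) ⁻¹' {x i} := by
    ext y; simp [cyl]
  rw [this]
  exact (Set.finite_Iio k).isOpen_biInter fun i _ =>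
    (continuous_apply i).isOpen_preimage _ (isOpen_discrete _)

lemma not_tail_periodic (hrec : IsRecurrentPt shift a) (hper : ¬ IsPeriodicPoint shift a)
    (m n : ℕ) (hn : 0 < n) : ¬ (∀ i, a (i + m + n) = a (i + m)) := by
  intro h
  apply hper
  refine ⟨n, hn, ?_⟩
  funext i
  rw [shift_iterate]
  -- show a (i + n) = a i
  obtain ⟨p, hp, hpc⟩ := rec_large hrec (isOpen_cyl a (i + n + 1))
    (fun j _ => rfl) m
  have h1 : a (i + n + p) = a (i + n) := by
    have := hpc (i + n) (by omega); rwa [shift_iterate] at this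
  have h2 : a (i + p) = a i := by
    have := hpc i (by omega); rwa [shift_iterate] at this
  have h3 : a (i + p - m + m + n) = a (i + p - m + m) := h (i + p - m)
  have e : i + p - m + m = i + p := by omega
  rw [e] at h3
  rw [← h1, show i + n + p = i + p + n from by omega, h3, h2]

lemma orbit_inj (hrec : IsRecurrentPt shift a) (hper : ¬ IsPeriodicPoint shift a)
    {i j : ℕ} (hij : i < j) : shift^[i] a ≠ shift^[j] a := by
  intro h
  apply not_tail_periodic hrec hper i (j - i) (by omega)
  intro k
  have : shift^[i] a k = shift^[j] a k := by rw [h]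
  rw [shift_iterate, shift_iterate] at this
  have e : k + i + (j - i) = k + j := by omega
  rw [e, this]

lemma non_isolated (hrec : IsRecurrentPt shift a) (hper : ¬ IsPeriodicPoint shift a)
    {x : ℕ → Fin N} (hx : x ∈ closure (Set.range fun n : ℕ => shift^[n] a)) (k : ℕ) :
    ∃ z ∈ closure (Set.range fun n : ℕ => shift^[n] a), z ≠ x ∧ ∀ i < k, z i = x i := by
  obtain ⟨w, hwc, hwo⟩ := _root_.mem_closure_iff.mp hx (cyl x k) (isOpen_cyl x k)
    (fun i _ => rfl)
  obtain ⟨m, rfl⟩ := hwo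
  -- find a second, distinct orbit point in the same cylinder around w
  have hpre : IsOpen (shift^[m] ⁻¹' cyl (shift^[m] a) k : Set (ℕ → Fin N)) :=
    (continuous_shift_s13.iterate m).isOpen_preimage _ (isOpen_cyl _ k)
  obtain ⟨p, hp, hpc⟩ := hrec _ (hpre.mem_nhds (by exact fun i _ => rfl))
  have hz2 : shift^[m + p] a ∈ cyl (shift^[m] a) k := by
    rw [Function.iterate_add_apply]; exact hpc
  have hne : shift^[m + p] a ≠ shift^[m] a :=
    (orbit_inj hrec hper (by omega : m < m + p)).symm
  by_cases hwx : shift^[m] a = x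
  · exact ⟨shift^[m + p] a, subset_closure ⟨m + p, rfl⟩, by rw [hwx] at hne; exact hne,
      fun i hi => by rw [hz2 i hi]; exact hwc i hi⟩
  · exact ⟨shift^[m] a, subset_closure ⟨m, rfl⟩, hwx, hwc⟩

end

lemma rho_ge_half {N : ℕ} {x y : ℕ → Fin N} (h : x 0 ≠ y 0) : (1/2 : ℝ) ≤ rho x y := by
  have dnn : ∀ u v : Fin N, (0:ℝ) ≤ discMetric u v := by
    intro u v; unfold discMetric; split <;> norm_num
  have tnn : ∀ i, (0:ℝ) ≤ (1 / 2 : ℝ) ^ i *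
      (discMetric (x i) (y i) / (1 + discMetric (x i) (y i))) := by
    intro i
    have := dnn (x i) (y i)
    positivity
  have tle : ∀ i, (1 / 2 : ℝ) ^ i *
      (discMetric (x i) (y i) / (1 + discMetric (x i) (y i))) ≤ (1/2 : ℝ)^i := by
    intro i
    have hd := dnn (x i) (y i)
    have : discMetric (x i) (y i) / (1 + discMetric (x i) (y i)) ≤ 1 := by
      rw [div_le_one (by linarith)]; linarith
    calc (1 / 2 : ℝ) ^ i * (discMetric (x i) (y i) / (1 + discMetric (x i) (y i)))
        ≤ (1/2:ℝ)^i * 1 := by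
          apply mul_le_mul_of_nonneg_left this (by positivity)
      _ = (1/2:ℝ)^i := mul_one _
  have hsum : Summable (fun i => (1 / 2 : ℝ) ^ i *
      (discMetric (x i) (y i) / (1 + discMetric (x i) (y i)))) :=
    Summable.of_nonneg_of_le tnn tle (summable_geometric_of_lt_one (by norm_num) (by norm_num))
  have h0 : (1/2 : ℝ) = (1 / 2 : ℝ) ^ 0 *
      (discMetric (x 0) (y 0) / (1 + discMetric (x 0) (y 0))) := by
    rw [pow_zero, one_mul, discMetric, if_neg h]
    norm_num
  rw [rho]
  exact h0.trans_le (Summable.le_tsum hsum 0 fun i _ => tnn i)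

lemma cyl_basis {N : ℕ} {O : Set (ℕ → Fin N)} (hO : IsOpen O) {x : ℕ → Fin N} (hx : x ∈ O) :
    ∃ k, cyl x k ⊆ O := by
  obtain ⟨I, u, h1, h2⟩ := isOpen_pi_iff.mp hO x hx
  refine ⟨I.sup id + 1, fun y hy => h2 fun i hi => ?_⟩
  have : y i = x i := hy i (Nat.lt_succ_of_le (Finset.le_sup (f := id) hi))
  rw [this]; exact (h1 i hi).2

/-- The subshift generated by a non-periodic recurrent point of the shift on `Σ^N` is
chaotic in the sense of Robinson: topologically transitive with sensitive dependence
on initial conditions. -/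
theorem robinson_chaos_on_orbitClosure {N : ℕ} (a : ℕ → Fin N)
    (hrec : IsRecurrentPt shift a) (hper : ¬ IsPeriodicPoint shift a) :
    (∀ U V : Set (ℕ → Fin N),
      (∃ U' : Set (ℕ → Fin N), IsOpen U' ∧
          U = U' ∩ closure (Set.range fun n : ℕ => shift^[n] a)) →
      (∃ V' : Set (ℕ → Fin N), IsOpen V' ∧
          V = V' ∩ closure (Set.range fun n : ℕ => shift^[n] a)) →
      U.Nonempty → V.Nonempty →
      ∃ n > 0, (shift^[n] '' U ∩ V).Nonempty) ∧
    (∃ δ > (0 : ℝ), ∀ x ∈ closure (Set.range fun n : ℕ => shift^[n] a),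
      ∀ V ∈ nhdsWithin x (closure (Set.range fun n : ℕ => shift^[n] a)),
        ∃ y ∈ V, ∃ n > 0, rho (shift^[n] x) (shift^[n] y) > δ) := by
  constructor
  · -- topological transitivity
    rintro U V ⟨U', hU'o, rfl⟩ ⟨V', hV'o, rfl⟩ ⟨u, huU', huc⟩ ⟨v, hvV', hvc⟩
    obtain ⟨w, hwU', hwo⟩ := _root_.mem_closure_iff.mp huc U' hU'o huU'
    obtain ⟨n1, rfl⟩ := hwo
    obtain ⟨w2, hw2V', hw2o⟩ := _root_.mem_closure_iff.mp hvc V' hV'o hvV'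
    obtain ⟨m, rfl⟩ := hw2o
    have hpre : IsOpen (shift^[m] ⁻¹' V' : Set (ℕ → Fin N)) :=
      (continuous_shift_s13.iterate m).isOpen_preimage _ hV'o
    obtain ⟨p, hp, hpV⟩ := rec_large hrec hpre hw2V' n1
    refine ⟨m + p - n1, by omega, shift^[m + p] a, ⟨shift^[n1] a,
      ⟨hwU', subset_closure ⟨n1, rfl⟩⟩, ?_⟩,
      ⟨by rw [Function.iterate_add_apply]; exact hpV, subset_closure ⟨m + p, rfl⟩⟩⟩
    rw [← Function.iterate_add_apply]
    congr 1
    omega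
  · -- sensitive dependence
    refine ⟨1/4, by norm_num, ?_⟩
    intro x hx V hV
    obtain ⟨O, hOo, hxO, hOV⟩ := mem_nhdsWithin.mp hV
    obtain ⟨k, hk⟩ := cyl_basis hOo hxO
    obtain ⟨z, hzc, hzx, hzk⟩ := non_isolated hrec hper hx (k + 1)
    obtain ⟨j, hj⟩ := Function.ne_iff.mp hzx
    have hjk : k + 1 ≤ j := by
      by_contra hlt
      exact hj (hzk j (by omega))
    refine ⟨z, hOV ⟨hk fun i hi => hzk i (by omega), hzc⟩, j, by omega, ?_⟩
    have h0 : shift^[j] x 0 ≠ shift^[j] z 0 := by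
      rw [shift_iterate, shift_iterate, Nat.zero_add]
      exact fun e => hj e.symm
    have := rho_ge_half h0
    linarith
end
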